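/- Let 0 < p < 1 and let X be a positive random variable with atomless law satisfying the distributional identity X ~ 1/X + ε with ε ~ Bernoulli(p) independent of X. Then E[log(X)·1_{X>1}] = (1/p)·E[log X]. -/

import Mathlib

open MeasureTheory ProbabilityTheory Real Set

/-!
Put `Y = 1/X + ε`, so that `Y` has the law of `X`. Splitting `log Y` at `Y = 1` gives
`E[log X] - E[log X; X > 1] = E[log Y; Y ≤ 1]`. Since `1/X + ε ≤ 1` forces `ε = 0` and `X ≥ 1`,
and then `log Y = -log X`, independence turns the right-hand side into `-(1 - p) E[log X; X > 1]`
(the event `X = 1` is harmless because `log 1 = 0`).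
Hence `E[log X] = p E[log X; X > 1]`.
-/

lemma ae_eq_zero_or_eq_one_of_measure_eq {Ω : Type*} [MeasurableSpace Ω] {μ : Measure Ω}
    [IsProbabilityMeasure μ] {ε : Ω → ℝ} (hε : Measurable ε) {p : ℝ}
    (h1 : μ {ω | ε ω = 1} = ENNReal.ofReal p) (h0 : μ {ω | ε ω = 0} = ENNReal.ofReal (1 - p)) :
    ∀ᵐ ω ∂μ, ε ω = 0 ∨ ε ω = 1 := by
  have hm : ∀ c, MeasurableSet {ω | ε ω = c} := fun c => hε (measurableSet_singleton c)
  have hunion : μ ({ω | ε ω = 0} ∪ {ω | ε ω = 1}) = ENNReal.ofReal (1 - p) + ENNReal.ofReal p := by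
    rw [measure_union (disjoint_left.2 fun ω h0 h1 => by simp_all) (hm 1), h0, h1]
  rw [ae_iff_measure_eq (p := fun ω => ε ω = 0 ∨ ε ω = 1) ((hm 0).union (hm 1)).nullMeasurableSet,
    measure_univ, ofPred_or]
  refine le_antisymm prob_le_one ?_
  simpa [hunion] using ENNReal.ofReal_add_le (p := 1 - p) (q := p)

lemma indicator_Iic_log_inv {x : ℝ} (hx : 0 < x) :
    (Iic 1).indicator log x⁻¹ = -(Ioi 1).indicator log x := by
  simp only [indicator_apply, mem_Iic, mem_Ioi, log_inv, inv_le_one₀ hx]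
  split_ifs with h h' h' <;> first | rfl | simp [le_antisymm (not_lt.1 h') h] | linarith

lemma indicator_Iic_log_inv_add {x e : ℝ} (hx : 0 < x) (he : e = 0 ∨ e = 1) :
    (Iic 1).indicator log (x⁻¹ + e) =
      -((Ioi 1).indicator log x * ({0} : Set ℝ).indicator 1 e) := by
  rcases he with rfl | rfl
  · simp [indicator_Iic_log_inv hx]
  · have : 1 < x⁻¹ + 1 := by have := inv_pos.2 hx; linarith
    rw [indicator_of_notMem (show x⁻¹ + 1 ∉ Iic 1 from not_le.2 this)]
    simp

lemma ProbabilityTheory.IdentDistrib.integral_sub_integral_indicator {α β : Type*}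
    [MeasurableSpace α] [MeasurableSpace β] {μ : Measure α} {ν : Measure β} {X : α → ℝ} {Y : β → ℝ}
    (h : IdentDistrib X Y μ ν) {f : ℝ → ℝ} (hf : Measurable f) {s : Set ℝ} (hs : MeasurableSet s)
    (hint : Integrable (fun a => f (X a)) μ) :
    ∫ a, f (X a) ∂μ - ∫ a, s.indicator f (X a) ∂μ = ∫ b, sᶜ.indicator f (Y b) ∂ν := by
  have hf' : IdentDistrib (fun a => f (X a)) (fun b => f (Y b)) μ ν := h.comp hf
  have hfs : IdentDistrib (fun a => s.indicator f (X a)) (fun b => s.indicator f (Y b)) μ ν :=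
    h.comp (hf.indicator hs)
  have hints : Integrable (fun a => s.indicator f (X a)) μ :=
    hint.indicator₀ (h.aemeasurable_fst.nullMeasurable hs) |>.congr
      (ae_of_all _ fun _ => indicator_comp_right _)
  rw [hf'.integral_eq, hfs.integral_eq,
    ← integral_sub (hf'.integrable_snd hint) (hfs.integrable_snd hints)]
  congr 1 with b
  rw [sub_eq_iff_eq_add', indicator_self_add_compl_apply]

lemma integral_indicator_Iic_log_one_div_add {Ω : Type*} [MeasurableSpace Ω] {μ : Measure Ω}
    {X ε : Ω → ℝ} (hX : Measurable X) (hε : Measurable ε) (hXpos : ∀ᵐ ω ∂μ, 0 < X ω)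
    (hε01 : ∀ᵐ ω ∂μ, ε ω = 0 ∨ ε ω = 1) (hindep : IndepFun X ε μ) :
    ∫ ω, (Iic 1).indicator log (1 / X ω + ε ω) ∂μ =
      -(∫ ω, (Ioi 1).indicator log (X ω) ∂μ) * μ.real {ω | ε ω = 0} := by
  have hmul := hindep.integral_fun_comp_mul_comp hX.aemeasurable hε.aemeasurable
    (measurable_log.indicator measurableSet_Ioi).aestronglyMeasurable
    (measurable_const.indicator (measurableSet_singleton 0)).aestronglyMeasurable
    (f := (Ioi 1).indicator log) (g := ({0} : Set ℝ).indicator 1)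
  have hG : ∫ ω, ({0} : Set ℝ).indicator 1 (ε ω) ∂μ = μ.real {ω | ε ω = 0} :=
    integral_indicator_one (hε (measurableSet_singleton 0))
  rw [← hG, neg_mul, ← hmul, ← integral_neg]
  refine integral_congr_ae ?_
  filter_upwards [hXpos, hε01] with ω hXω hεω
  simpa using indicator_Iic_log_inv_add hXω hεω

theorem bernoulli_p_indicator_identity_gt_general
    {Ω : Type*} [MeasureSpace Ω] [IsProbabilityMeasure (ℙ : Measure Ω)]
    (p : ℝ) (hp0 : 0 < p)
    (X ε : Ω → ℝ) (hXm : Measurable X) (hεm : Measurable ε)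
    (hXpos : ∀ᵐ ω ∂ℙ, 0 < X ω)
    (hε1 : ℙ {ω | ε ω = 1} = ENNReal.ofReal p)
    (hε0 : ℙ {ω | ε ω = 0} = ENNReal.ofReal (1 - p))
    (hindep : IndepFun X ε ℙ)
    (hdist : Measure.map X ℙ = Measure.map (fun ω => 1 / X ω + ε ω) ℙ)
    (hint : Integrable (fun ω => Real.log (X ω)) ℙ) :
    ∫ ω in {ω | 1 < X ω}, Real.log (X ω) ∂ℙ =
      (1 / p) * ∫ ω, Real.log (X ω) ∂ℙ := by
  have hid : IdentDistrib X (fun ω => 1 / X ω + ε ω) ℙ ℙ :=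
    ⟨hXm.aemeasurable, ((measurable_const.div hXm).add hεm).aemeasurable, hdist⟩
  have hA : ∫ ω in {ω | 1 < X ω}, log (X ω) ∂ℙ = ∫ ω, (Ioi 1).indicator log (X ω) ∂ℙ := by
    rw [← integral_indicator (measurableSet_lt measurable_const hXm)]
    rfl
  have hp1 : p ≤ 1 := ENNReal.ofReal_le_one.1 (hε1 ▸ prob_le_one)
  have hq : (ℙ : Measure Ω).real {ω | ε ω = 0} = 1 - p := by
    rw [measureReal_def, hε0, ENNReal.toReal_ofReal (by linarith)]
  have hsplit :=
    hid.integral_sub_integral_indicator measurable_log (measurableSet_Ioi (a := 1)) hint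
  rw [compl_Ioi, integral_indicator_Iic_log_one_div_add hXm hεm hXpos
    (ae_eq_zero_or_eq_one_of_measure_eq hεm hε1 hε0) hindep, hq] at hsplit
  rw [hA]
  field_simp
  linarith

/-- For the Bernoulli(p) invariant distribution `X ~ 1/X + ε`:
`E[log(X)·1_{X>1}] = (1/p)·E[log X]`. -/
theorem bernoulli_p_indicator_identity_gt
    {Ω : Type*} [MeasureSpace Ω] [IsProbabilityMeasure (ℙ : Measure Ω)]
    (p : ℝ) (hp0 : 0 < p) (hp1 : p < 1)
    (X ε : Ω → ℝ) (hXm : Measurable X) (hεm : Measurable ε)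
    (hXpos : ∀ᵐ ω ∂ℙ, 0 < X ω)
    (hatomless : ∀ c : ℝ, ℙ {ω | X ω = c} = 0)
    (hε1 : ℙ {ω | ε ω = 1} = ENNReal.ofReal p)
    (hε0 : ℙ {ω | ε ω = 0} = ENNReal.ofReal (1 - p))
    (hindep : IndepFun X ε ℙ)
    (hdist : Measure.map X ℙ = Measure.map (fun ω => 1 / X ω + ε ω) ℙ)
    (hint : Integrable (fun ω => Real.log (X ω)) ℙ) :
    ∫ ω in {ω | 1 < X ω}, Real.log (X ω) ∂ℙ =
      (1 / p) * ∫ ω, Real.log (X ω) ∂ℙ :=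
  bernoulli_p_indicator_identity_gt_general p hp0 X ε hXm hεm hXpos hε1 hε0 hindep hdist hint
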